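/- Let G = (V, E, w) be a finite edge-weighted graph with nonnegative weights and let x ∈ ℝ^E be a nonnegative vector satisfying the degree constraints Σ_{j ∈ N(i)} x_{ij} ≤ 1 for all vertices i. Suppose x also satisfies the odd set inequalities Σ_{e ∈ E[S]} x_e ≤ (|S|-1)/2 for all odd-cardinality subsets S ⊆ V with |S| ≤ s, where s is odd. Then the scaled vector ((s+1)/(s+2))·x lies in the matching polytope of G, i.e., it satisfies all odd set inequalities, including those for |S| > s. -/

import Mathlib

open Finset

lemma double_count_aux {V : Type*} [Fintype V] [DecidableEq V]
    (G : SimpleGraph V) [DecidableRel G.Adj] (x : Sym2 V → ℝ) (S : Finset V) :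
    ∑ p ∈ (S ×ˢ S).filter (fun p => G.Adj p.1 p.2), x s(p.1, p.2)
      = 2 * ∑ e ∈ G.edgeFinset.filter (fun e => ∀ v ∈ e, v ∈ S), x e := by
  rw [← Finset.sum_fiberwise_of_maps_to (g := fun p => s(p.1, p.2))
      (t := G.edgeFinset.filter (fun e => ∀ v ∈ e, v ∈ S))
      (fun p hp => by
        simp only [Finset.mem_filter, Finset.mem_product] at hp
        simp only [Finset.mem_filter, SimpleGraph.mem_edgeFinset,
          SimpleGraph.mem_edgeSet, Sym2.mem_iff]
        exact ⟨hp.2, fun v hv => by rcases hv with h | h <;> subst h <;>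
          [exact hp.1.1; exact hp.1.2]⟩)]
  rw [Finset.mul_sum]
  refine Finset.sum_congr rfl fun e he => ?_
  induction e using Sym2.ind with
  | _ a b =>
    simp only [Finset.mem_filter, SimpleGraph.mem_edgeFinset,
      SimpleGraph.mem_edgeSet, Sym2.mem_iff] at he
    obtain ⟨hadj, hmem⟩ := he
    have haS : a ∈ S := hmem a (Or.inl rfl)
    have hbS : b ∈ S := hmem b (Or.inr rfl)
    have hne : a ≠ b := G.ne_of_adj hadj
    have hset : ((S ×ˢ S).filter (fun p => G.Adj p.1 p.2)).filter
        (fun p => s(p.1, p.2) = s(a, b)) = {(a, b), (b, a)} := by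
      ext ⟨u, v⟩
      simp only [Finset.mem_filter, Finset.mem_product, Finset.mem_insert,
        Finset.mem_singleton, Prod.mk.injEq, Sym2.eq, Sym2.rel_iff',
        Prod.swap_prod_mk]
      constructor
      · rintro ⟨-, h⟩; exact h
      · rintro (⟨rfl, rfl⟩ | ⟨rfl, rfl⟩)
        · exact ⟨⟨⟨haS, hbS⟩, hadj⟩, Or.inl ⟨rfl, rfl⟩⟩
        · exact ⟨⟨⟨hbS, haS⟩, hadj.symm⟩, Or.inr ⟨rfl, rfl⟩⟩
    rw [hset, Finset.sum_pair (by simp [hne])]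
    have : s(b, a) = s(a, b) := Sym2.eq_swap
    rw [this]; ring

theorem stmt_4 {V : Type*} [Fintype V] [DecidableEq V]
    (G : SimpleGraph V) [DecidableRel G.Adj]
    (w : Sym2 V → ℝ) (hw : ∀ e ∈ G.edgeFinset, 0 ≤ w e)
    (x : Sym2 V → ℝ)
    (hnonneg : ∀ e ∈ G.edgeFinset, 0 ≤ x e)
    (hdeg : ∀ i : V, ∑ j ∈ G.neighborFinset i, x s(i, j) ≤ 1)
    (s : ℕ) (hs : Odd s)
    (hodd : ∀ S : Finset V, Odd S.card → S.card ≤ s →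
      ∑ e ∈ G.edgeFinset.filter (fun e => ∀ v ∈ e, v ∈ S), x e
        ≤ ((S.card : ℝ) - 1) / 2) :
    (∀ e ∈ G.edgeFinset, 0 ≤ ((s : ℝ) + 1) / ((s : ℝ) + 2) * x e) ∧
    (∀ i : V, ∑ j ∈ G.neighborFinset i, ((s : ℝ) + 1) / ((s : ℝ) + 2) * x s(i, j) ≤ 1) ∧
    (∀ S : Finset V, Odd S.card →
      ∑ e ∈ G.edgeFinset.filter (fun e => ∀ v ∈ e, v ∈ S),
          ((s : ℝ) + 1) / ((s : ℝ) + 2) * x e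
        ≤ ((S.card : ℝ) - 1) / 2) := by
  have hs0 : (0:ℝ) ≤ (s : ℝ) := Nat.cast_nonneg s
  have hcpos : (0:ℝ) ≤ ((s : ℝ) + 1) / ((s : ℝ) + 2) := by positivity
  have hcle : ((s : ℝ) + 1) / ((s : ℝ) + 2) ≤ 1 := by
    rw [div_le_one (by linarith)]; linarith
  refine ⟨fun e he => mul_nonneg hcpos (hnonneg e he), fun i => ?_, fun S hS => ?_⟩
  · rw [← Finset.mul_sum]
    calc ((s : ℝ) + 1) / ((s : ℝ) + 2) * ∑ j ∈ G.neighborFinset i, x s(i, j)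
        ≤ 1 * 1 := by
          apply mul_le_mul hcle (hdeg i) ?_ zero_le_one
          apply Finset.sum_nonneg
          intro j hj
          exact hnonneg _ (by simpa [SimpleGraph.mem_edgeFinset] using
            (G.mem_neighborFinset i j).mp hj)
      _ = 1 := one_mul 1
  · rw [← Finset.mul_sum]
    by_cases hcard : S.card ≤ s
    · have h1 := hodd S hS hcard
      have hB : (0:ℝ) ≤ ((S.card : ℝ) - 1) / 2 := by
        have : 1 ≤ S.card := hS.pos
        have : (1:ℝ) ≤ (S.card : ℝ) := by exact_mod_cast this
        linarith
      calc ((s : ℝ) + 1) / ((s : ℝ) + 2) *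
            ∑ e ∈ G.edgeFinset.filter (fun e => ∀ v ∈ e, v ∈ S), x e
          ≤ ((s : ℝ) + 1) / ((s : ℝ) + 2) * (((S.card : ℝ) - 1) / 2) := by
            exact mul_le_mul_of_nonneg_left h1 hcpos
        _ ≤ 1 * (((S.card : ℝ) - 1) / 2) := mul_le_mul_of_nonneg_right hcle hB
        _ = ((S.card : ℝ) - 1) / 2 := one_mul _
    · -- large odd set: |S| ≥ s + 2
      push_neg at hcard
      have hge : s + 2 ≤ S.card := by
        rcases hS with ⟨k, hk⟩
        rcases hs with ⟨m, hm⟩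
        omega
      -- degree bound: 2 * sum ≤ |S|
      have key : 2 * ∑ e ∈ G.edgeFinset.filter (fun e => ∀ v ∈ e, v ∈ S), x e
          ≤ (S.card : ℝ) := by
        rw [← double_count_aux G x S]
        have step1 : ∑ p ∈ (S ×ˢ S).filter (fun p => G.Adj p.1 p.2), x s(p.1, p.2)
            = ∑ i ∈ S, ∑ j ∈ S.filter (G.Adj i), x s(i, j) := by
          rw [Finset.sum_filter, Finset.sum_product]
          refine Finset.sum_congr rfl fun i _ => ?_
          rw [Finset.sum_filter]
        rw [step1]
        calc ∑ i ∈ S, ∑ j ∈ S.filter (G.Adj i), x s(i, j)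
            ≤ ∑ i ∈ S, ∑ j ∈ G.neighborFinset i, x s(i, j) := by
              refine Finset.sum_le_sum fun i _ => ?_
              refine Finset.sum_le_sum_of_subset_of_nonneg ?_ ?_
              · intro j hj
                simp only [Finset.mem_filter] at hj
                exact (G.mem_neighborFinset i j).mpr hj.2
              · intro j hj _
                exact hnonneg _ (by simpa [SimpleGraph.mem_edgeFinset] using
                  (G.mem_neighborFinset i j).mp hj)
          _ ≤ ∑ _i ∈ S, (1:ℝ) := Finset.sum_le_sum fun i _ => hdeg i
          _ = (S.card : ℝ) := by simp
      have hgeR : (s : ℝ) + 2 ≤ (S.card : ℝ) := by exact_mod_cast hge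
      have hsum : ∑ e ∈ G.edgeFinset.filter (fun e => ∀ v ∈ e, v ∈ S), x e
          ≤ (S.card : ℝ) / 2 := by linarith
      rw [div_mul_eq_mul_div, div_le_div_iff₀ (by linarith) (by norm_num)]
      nlinarith [mul_le_mul_of_nonneg_left hsum (by linarith : (0:ℝ) ≤ (s:ℝ) + 1)]
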